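/- Let $x:[0,\infty)\to\mathbb{R}^n$ solve $\dot x_i=\sum_j a_{ij}\mathrm{sign}(x_j-x_i)|x_j-x_i|^\alpha$ with $A$ symmetric nonnegative, zero diagonal, connected graph, $0<\alpha<1$. Let $\kappa=\frac1n\sum_i x_i(0)$, $\delta(t)=x(t)-\kappa\mathbf{1}$, $V_2(t)=\tfrac12\delta(t)^T\delta(t)$, and $B=[a_{ij}^{2/(1+\alpha)}]$. Then $\frac{dV_2}{dt}(t) \le -2^{\alpha}\lambda_2(L_B)^{\frac{1+\alpha}{2}} V_2(t)^{\frac{1+\alpha}{2}}$ whenever $V_2(t)>0$, and $V_2(t)=0$ for all $t\ge t_2=\frac{2^{1-\alpha}V_2(0)^{\frac{1-\alpha}{2}}}{(1-\alpha)\lambda_2(L_B)^{\frac{1+\alpha}{2}}}$; thus every $x_i(t)$ equals the initial average $\kappa$ for $t\ge t_2$. -/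

import Mathlib

open Finset Matrix

def graphLaplacian {n : ℕ} (A : Matrix (Fin n) (Fin n) ℝ) : Matrix (Fin n) (Fin n) ℝ :=
  fun i j => if i = j then ∑ k ∈ univ.erase i, A i k else -A i j

def WeightConnected {n : ℕ} (A : Matrix (Fin n) (Fin n) ℝ) : Prop :=
  ∀ i j : Fin n, Relation.ReflTransGen (fun a b => 0 < A a b) i j

/-!
Summing the protocol over all agents, the antisymmetric pair interactions cancel, so the average
`κ` is invariant and the disagreement vector `δ = x - κ𝟙` stays orthogonal to `𝟙`. Pairing the same
interactions symmetrically gives `V₂' = -½ ∑ᵢⱼ aᵢⱼ |xⱼ - xᵢ| ^ (1 + α)`, and since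
`aᵢⱼ |u| ^ (1 + α) = (bᵢⱼ u²) ^ ((1 + α) / 2)`, subadditivity of `r ↦ r ^ ((1 + α) / 2)` bounds this
by the Laplacian quadratic form `δᵀ L_B δ` to the power `(1 + α) / 2`, which the Fiedler bound on
`𝟙⊥` in turn bounds by `λ₂(L_B) ‖δ‖²`. The resulting inequality `V₂' ≤ -c V₂ ^ p` with `p < 1`
makes `V₂ ^ (1 - p) + c (1 - p) t` nonincreasing while `V₂ > 0`, which forces `V₂` to vanish in
finite time.
-/

lemma Real.sign_mul_self (r : ℝ) : Real.sign r * r = |r| := by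
  rcases lt_trichotomy r 0 with h | rfl | h
  · rw [Real.sign_of_neg h, abs_of_neg h]; ring
  · simp
  · rw [Real.sign_of_pos h, abs_of_pos h, one_mul]

lemma Real.rpow_sum_le_sum_rpow {ι : Type*} (s : Finset ι) {f : ι → ℝ} (hf : ∀ i ∈ s, 0 ≤ f i)
    {p : ℝ} (hp0 : 0 < p) (hp1 : p ≤ 1) : (∑ i ∈ s, f i) ^ p ≤ ∑ i ∈ s, f i ^ p := by
  induction s using Finset.cons_induction with
  | empty => simp [Real.zero_rpow hp0.ne']
  | cons a s ha ih =>
    rw [forall_mem_cons] at hf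
    rw [sum_cons, sum_cons]
    exact (Real.rpow_add_le_add_rpow hf.1 (sum_nonneg hf.2) hp0.le hp1).trans
      (add_le_add le_rfl (ih hf.2))

lemma rpow_mul_sq_rpow {a α : ℝ} (ha : 0 ≤ a) (hα : 0 < 1 + α) (u : ℝ) :
    (a ^ (2 / (1 + α)) * u ^ 2) ^ ((1 + α) / 2) = a * |u| ^ (1 + α) := by
  rw [Real.mul_rpow (Real.rpow_nonneg ha _) (sq_nonneg u), ← Real.rpow_mul ha, ← sq_abs,
    ← Real.rpow_natCast, ← Real.rpow_mul (abs_nonneg u),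
    show 2 / (1 + α) * ((1 + α) / 2) = 1 by field_simp, Real.rpow_one,
    show ((2 : ℕ) : ℝ) * ((1 + α) / 2) = 1 + α by push_cast; ring]

lemma sum_mul_sum_of_antisymm {ι : Type*} [Fintype ι] (F : ι → ι → ℝ)
    (hF : ∀ i j, F j i = -F i j) (w : ι → ℝ) :
    ∑ i, w i * ∑ j, F i j = -(1 / 2) * ∑ i, ∑ j, (w j - w i) * F i j := by
  have hswap : ∑ i, ∑ j, w j * F i j = -∑ i, ∑ j, w i * F i j := by
    rw [sum_comm, ← sum_neg_distrib]
    refine sum_congr rfl fun i _ => ?_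
    rw [← sum_neg_distrib]
    exact sum_congr rfl fun j _ => by rw [hF, mul_neg]
  simp only [mul_sum, sub_mul, sum_sub_distrib, hswap]
  ring

lemma dotProduct_mulVec_of_transpose_mul_self {m R : Type*} [Fintype m] [DecidableEq m]
    [CommRing R] {T : Matrix m m R} (hT : Tᵀ * T = 1) (a b : m → R) :
    (T *ᵥ a) ⬝ᵥ (T *ᵥ b) = a ⬝ᵥ b := by
  rw [dotProduct_mulVec, ← mulVec_transpose, mulVec_mulVec, hT, one_mulVec]

lemma sum_sub_sum_div_card_eq_zero {n : ℕ} (hn : n ≠ 0) (y : Fin n → ℝ) :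
    ∑ i, (y i - (∑ j, y j) / n) = 0 := by
  rw [sum_sub_distrib, sum_const, card_univ, Fintype.card_fin, nsmul_eq_mul]
  field_simp
  ring

section Fiedler

variable {n : ℕ} (hn : 1 < n)
include hn

lemma Fin.mk_one_le_of_ne_mk_zero {k : Fin n} (hk : k ≠ ⟨0, by omega⟩) : (⟨1, hn⟩ : Fin n) ≤ k :=
  Nat.one_le_iff_ne_zero.2 fun h => hk (Fin.ext h)

lemma mul_dotProduct_self_le_dotProduct_diagonal_mulVec {μ : Fin n → ℝ} (hμ : Monotone μ)
    {y : Fin n → ℝ} (hy : y ⟨0, by omega⟩ = 0) :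
    μ ⟨1, hn⟩ * (y ⬝ᵥ y) ≤ y ⬝ᵥ (diagonal μ *ᵥ y) := by
  simp only [dotProduct, mulVec_diagonal, mul_sum]
  refine sum_le_sum fun k _ => ?_
  by_cases hk : k = ⟨0, by omega⟩
  · simp [hk, hy]
  · have := mul_le_mul_of_nonneg_right (hμ (Fin.mk_one_le_of_ne_mk_zero hn hk))
      (mul_self_nonneg (y k))
    linarith

/-- Fiedler's bound. Since `μ k > 0` for `k ≠ 0`, `T` maps the kernel vector `e` onto the first
coordinate axis, so `v ⬝ᵥ e = 0` forces the first coordinate of `T *ᵥ v` to vanish. -/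
lemma mul_dotProduct_self_le_dotProduct_mulVec {M T : Matrix (Fin n) (Fin n) ℝ} {μ : Fin n → ℝ}
    (hT : Tᵀ * T = 1) (hM : M = Tᵀ * diagonal μ * T) (hμ : Monotone μ) (hμ₁ : 0 < μ ⟨1, hn⟩)
    {e : Fin n → ℝ} (he : e ≠ 0) (hMe : M *ᵥ e = 0) {v : Fin n → ℝ} (hv : v ⬝ᵥ e = 0) :
    μ ⟨1, hn⟩ * (v ⬝ᵥ v) ≤ v ⬝ᵥ (M *ᵥ v) := by
  rw [← dotProduct_mulVec_of_transpose_mul_self hT] at hv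
  set i₀ : Fin n := ⟨0, by omega⟩
  set w := T *ᵥ e
  have hDw : diagonal μ *ᵥ w = 0 := by
    have h := congrArg (T *ᵥ ·) hMe
    simp only [hM, mulVec_mulVec, mulVec_zero, ← Matrix.mul_assoc, mul_eq_one_comm.mp hT,
      Matrix.one_mul] at h
    rwa [← mulVec_mulVec] at h
  have hw : ∀ k ≠ i₀, w k = 0 := fun k hk => by
    have hμk : 0 < μ k := hμ₁.trans_le (hμ (Fin.mk_one_le_of_ne_mk_zero hn hk))
    simpa [mulVec_diagonal, hμk.ne'] using congrFun hDw k
  have hw₀ : w i₀ ≠ 0 := fun h => he <| by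
    have hw0 : w = 0 := funext fun k => by by_cases hk : k = i₀ <;> simp_all
    rw [← one_mulVec e, ← hT, ← mulVec_mulVec]
    change Tᵀ *ᵥ w = 0
    rw [hw0, mulVec_zero]
  have hy₀ : (T *ᵥ v) i₀ = 0 := by
    rw [dotProduct, sum_eq_single i₀ (fun k _ hk => by rw [hw k hk, mul_zero]) (by simp)] at hv
    exact (mul_eq_zero.1 hv).resolve_right hw₀
  calc μ ⟨1, hn⟩ * (v ⬝ᵥ v) = μ ⟨1, hn⟩ * ((T *ᵥ v) ⬝ᵥ (T *ᵥ v)) := by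
        rw [dotProduct_mulVec_of_transpose_mul_self hT]
    _ ≤ (T *ᵥ v) ⬝ᵥ (diagonal μ *ᵥ (T *ᵥ v)) :=
        mul_dotProduct_self_le_dotProduct_diagonal_mulVec hn hμ hy₀
    _ = v ⬝ᵥ (M *ᵥ v) := by
        rw [hM, ← mulVec_mulVec, ← mulVec_mulVec, dotProduct_mulVec v Tᵀ, vecMul_transpose]

end Fiedler

section Laplacian

variable {n : ℕ}

lemma graphLaplacian_mulVec_apply (B : Matrix (Fin n) (Fin n) ℝ) (v : Fin n → ℝ) (i : Fin n) :
    (graphLaplacian B *ᵥ v) i = ∑ j, B i j * (v i - v j) := by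
  have hoff : ∀ j ∈ univ.erase i, graphLaplacian B i j * v j = -(B i j * v j) := fun j hj => by
    simp [graphLaplacian, (ne_of_mem_erase hj).symm]
  rw [mulVec, dotProduct, ← add_sum_erase _ _ (mem_univ i), ← add_sum_erase _ _ (mem_univ i),
    sub_self, mul_zero, zero_add, sum_congr rfl hoff, sum_neg_distrib]
  simp only [graphLaplacian, if_true, mul_sub, sum_sub_distrib, sum_mul]
  ring

lemma graphLaplacian_mulVec_one (B : Matrix (Fin n) (Fin n) ℝ) : graphLaplacian B *ᵥ 1 = 0 :=
  funext fun i => by simp [graphLaplacian_mulVec_apply]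

lemma dotProduct_graphLaplacian_mulVec {B : Matrix (Fin n) (Fin n) ℝ} (hB : B.IsSymm)
    (v : Fin n → ℝ) :
    v ⬝ᵥ (graphLaplacian B *ᵥ v) = (1 / 2) * ∑ i, ∑ j, B i j * (v j - v i) ^ 2 := by
  simp only [dotProduct, graphLaplacian_mulVec_apply]
  rw [sum_mul_sum_of_antisymm (fun i j => B i j * (v i - v j))
    (fun i j => by rw [hB.apply]; ring)]
  simp only [neg_mul, mul_sum]
  exact sum_congr rfl fun i _ => sum_congr rfl fun j _ => by ring

lemma mul_dotProduct_self_le_dotProduct_graphLaplacian_mulVec (hn : 1 < n)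
    {B T : Matrix (Fin n) (Fin n) ℝ} {μ : Fin n → ℝ} (hT : Tᵀ * T = 1)
    (hL : graphLaplacian B = Tᵀ * diagonal μ * T) (hμ : Monotone μ) (hμ₁ : 0 < μ ⟨1, hn⟩)
    {v : Fin n → ℝ} (hv : ∑ i, v i = 0) :
    μ ⟨1, hn⟩ * (v ⬝ᵥ v) ≤ v ⬝ᵥ (graphLaplacian B *ᵥ v) :=
  mul_dotProduct_self_le_dotProduct_mulVec hn hT hL hμ hμ₁
    (fun h => one_ne_zero (α := ℝ) (congrFun h ⟨0, by omega⟩)) (graphLaplacian_mulVec_one B)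
    (by rwa [dotProduct_one])

lemma mul_rpow_le_half_sum_mul_abs_rpow {A B : Matrix (Fin n) (Fin n) ℝ} (hA : A.IsSymm)
    (hA0 : ∀ i j, 0 ≤ A i j) {α : ℝ} (hα0 : -1 < α) (hα1 : α ≤ 1)
    (hB : ∀ i j, B i j = A i j ^ (2 / (1 + α))) {l : ℝ} (hl : 0 ≤ l) {δ : Fin n → ℝ}
    (hδ : l * (δ ⬝ᵥ δ) ≤ δ ⬝ᵥ (graphLaplacian B *ᵥ δ)) :
    2 ^ α * l ^ ((1 + α) / 2) * ((1 / 2) * (δ ⬝ᵥ δ)) ^ ((1 + α) / 2)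
      ≤ (1 / 2) * ∑ i, ∑ j, A i j * |δ j - δ i| ^ (1 + α) := by
  set p := (1 + α) / 2 with hp
  have hp0 : 0 < p := by linarith
  have hBsymm : B.IsSymm := IsSymm.ext fun i j => by rw [hB, hB, hA.apply]
  have hS : 0 ≤ δ ⬝ᵥ δ := dotProduct_self_star_nonneg δ
  have htwo : (2 : ℝ) ^ α * 2 = 2 ^ p * 2 ^ p := by
    rw [← Real.rpow_add two_pos, ← Real.rpow_add_one two_ne_zero, hp]; ring_nf
  have hterm : ∀ i j, 0 ≤ B i j * (δ j - δ i) ^ 2 := fun i j => by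
    rw [hB]; exact mul_nonneg (Real.rpow_nonneg (hA0 i j) _) (sq_nonneg _)
  have hpow : ∀ i j, (B i j * (δ j - δ i) ^ 2) ^ p = A i j * |δ j - δ i| ^ (1 + α) :=
    fun i j => by rw [hB, hp, rpow_mul_sq_rpow (hA0 i j) (by linarith)]
  calc 2 ^ α * l ^ p * ((1 / 2) * (δ ⬝ᵥ δ)) ^ p = (1 / 2) * (2 * (l * (δ ⬝ᵥ δ))) ^ p := by
        rw [Real.mul_rpow (by norm_num) hS, Real.mul_rpow (by norm_num) (mul_nonneg hl hS),
          Real.mul_rpow hl hS, Real.div_rpow (by norm_num) (by norm_num), Real.one_rpow]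
        field_simp
        linear_combination l ^ p * (δ ⬝ᵥ δ) ^ p * htwo
    _ ≤ (1 / 2) * (2 * (δ ⬝ᵥ (graphLaplacian B *ᵥ δ))) ^ p := by gcongr
    _ = (1 / 2) * (∑ ij : Fin n × Fin n, B ij.1 ij.2 * (δ ij.2 - δ ij.1) ^ 2) ^ p := by
        rw [dotProduct_graphLaplacian_mulVec hBsymm, Fintype.sum_prod_type]
        ring_nf
    _ ≤ (1 / 2) * ∑ ij : Fin n × Fin n, (B ij.1 ij.2 * (δ ij.2 - δ ij.1) ^ 2) ^ p := by
        gcongr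
        exact Real.rpow_sum_le_sum_rpow _ (fun ij _ => hterm ij.1 ij.2) hp0 (by linarith)
    _ = (1 / 2) * ∑ i, ∑ j, A i j * |δ j - δ i| ^ (1 + α) := by
        simp only [Fintype.sum_prod_type, hpow]

end Laplacian

section Protocol

variable {ι : Type*} {A : Matrix ι ι ℝ}

lemma sign_mul_rpow_antisymm (hA : A.IsSymm) (α : ℝ) (z : ι → ℝ) (i j : ι) :
    A j i * Real.sign (z i - z j) * |z i - z j| ^ α
      = -(A i j * Real.sign (z j - z i) * |z j - z i| ^ α) := by
  rw [hA.apply, ← neg_sub, Real.sign_neg, abs_neg]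
  ring

variable [Fintype ι]

noncomputable def consensusField (A : Matrix ι ι ℝ) (α : ℝ) (z : ι → ℝ) (i : ι) : ℝ :=
  ∑ j, A i j * Real.sign (z j - z i) * |z j - z i| ^ α

lemma sum_consensusField (hA : A.IsSymm) (α : ℝ) (z : ι → ℝ) :
    ∑ i, consensusField A α z i = 0 := by
  simpa [consensusField] using sum_mul_sum_of_antisymm _ (sign_mul_rpow_antisymm hA α z) 1

lemma sum_sub_mul_consensusField (hA : A.IsSymm) {α : ℝ} (hα : 1 + α ≠ 0) (z : ι → ℝ) (c : ℝ) :
    ∑ i, (z i - c) * consensusField A α z i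
      = -(1 / 2) * ∑ i, ∑ j, A i j * |z j - z i| ^ (1 + α) := by
  simp only [consensusField]
  rw [sum_mul_sum_of_antisymm _ (sign_mul_rpow_antisymm hA α z)]
  congr 1
  refine sum_congr rfl fun i _ => sum_congr rfl fun j _ => ?_
  rw [sub_sub_sub_cancel_right, Real.rpow_add' (abs_nonneg _) hα, Real.rpow_one,
    ← Real.sign_mul_self]
  ring

lemma sum_eq_of_hasDerivAt_consensusField (hA : A.IsSymm) {α : ℝ} {x : ℝ → ι → ℝ}
    (hx : ∀ t i, HasDerivAt (fun s => x s i) (consensusField A α (x t) i) t) (t : ℝ) :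
    ∑ i, x t i = ∑ i, x 0 i := by
  have hsum : ∀ t, HasDerivAt (fun s => ∑ i, x s i) 0 t := fun t => by
    rw [← sum_consensusField hA α (x t)]
    exact HasDerivAt.fun_sum fun i _ => hx t i
  exact is_const_of_deriv_eq_zero (fun s => (hsum s).differentiableAt) (fun s => (hsum s).deriv) t 0

lemma hasDerivAt_half_sum_sq_sub {x : ℝ → ι → ℝ} {x' : ι → ℝ} {t : ℝ}
    (hx : ∀ i, HasDerivAt (fun s => x s i) (x' i) t) (c : ℝ) :
    HasDerivAt (fun s => (1 / 2) * ∑ i, (x s i - c) ^ 2) (∑ i, (x t i - c) * x' i) t := by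
  refine ((HasDerivAt.fun_sum (u := univ) fun i _ => ((hx i).sub_const c).fun_pow 2).const_mul
    (1 / 2)).congr_deriv ?_
  rw [mul_sum]
  exact sum_congr rfl fun i _ => by push_cast; ring

end Protocol

section FiniteTime

variable {V : ℝ → ℝ} (hV : Differentiable ℝ V) {c p : ℝ}
  (hdV : ∀ t, 0 < V t → deriv V t ≤ -c * V t ^ p)
include hV hdV

lemma antitone_of_deriv_le_neg_mul_rpow (hV0 : ∀ t, 0 ≤ V t) (hc : 0 ≤ c) : Antitone V :=
  antitone_of_deriv_nonpos hV fun s => by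
    rcases (hV0 s).lt_or_eq with h | h
    · have := mul_nonneg hc (Real.rpow_nonneg (hV0 s) p)
      linarith [hdV s h]
    · exact (IsLocalMin.deriv_eq_zero (Filter.Eventually.of_forall fun y => by
        rw [← h]; exact hV0 y)).le

lemma antitoneOn_rpow_add_mul_of_deriv_le_neg_mul_rpow (hp : p < 1) {a b : ℝ}
    (hpos : ∀ s ∈ Set.Icc a b, 0 < V s) :
    AntitoneOn (fun s => V s ^ (1 - p) + c * (1 - p) * s) (Set.Icc a b) := by
  have hderiv : ∀ s ∈ Set.Icc a b, HasDerivAt (fun s => V s ^ (1 - p) + c * (1 - p) * s)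
      (deriv V s * (1 - p) * V s ^ (1 - p - 1) + c * (1 - p)) s := fun s hs =>
    ((hV s).hasDerivAt.rpow_const (Or.inl (hpos s hs).ne')).add
      ((hasDerivAt_id s).const_mul _ |>.congr_deriv (mul_one _))
  refine antitoneOn_of_deriv_nonpos (convex_Icc a b)
    (fun s hs => (hderiv s hs).continuousAt.continuousWithinAt)
    (fun s hs => (hderiv s (interior_subset hs)).differentiableAt.differentiableWithinAt)
    fun s hs => ?_
  have hs := interior_subset hs
  have hVs := hpos s hs
  have hcancel : V s ^ p * V s ^ (1 - p - 1) = 1 := by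
    rw [← Real.rpow_add hVs, show p + (1 - p - 1) = 0 by ring, Real.rpow_zero]
  have := mul_le_mul_of_nonneg_right (hdV s hVs)
    (mul_nonneg (sub_nonneg.2 hp.le) (Real.rpow_nonneg hVs.le (1 - p - 1)))
  have hneg : -c * V s ^ p * ((1 - p) * V s ^ (1 - p - 1)) = -(c * (1 - p)) := by
    linear_combination (-(c * (1 - p))) * hcancel
  rw [(hderiv s hs).deriv]
  linarith

lemma eq_zero_of_deriv_le_neg_mul_rpow (hV0 : ∀ t, 0 ≤ V t) (hc : 0 < c) (hp : p < 1) {t : ℝ}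
    (ht : V 0 ^ (1 - p) / (c * (1 - p)) ≤ t) : V t = 0 := by
  by_contra hne
  have hpos : 0 < V t := (hV0 t).lt_of_ne' hne
  have hcp : 0 < c * (1 - p) := mul_pos hc (sub_pos.2 hp)
  have ht0 : 0 ≤ t := (div_nonneg (Real.rpow_nonneg (hV0 0) _) hcp.le).trans ht
  have hanti := antitone_of_deriv_le_neg_mul_rpow hV hdV hV0 hc.le
  have hdecr := antitoneOn_rpow_add_mul_of_deriv_le_neg_mul_rpow hV hdV hp
    (fun s hs => hpos.trans_le (hanti hs.2)) (Set.left_mem_Icc.2 ht0) (Set.right_mem_Icc.2 ht0)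
    ht0
  have hVt := Real.rpow_pos_of_pos hpos (1 - p)
  have := (div_le_iff₀ hcp).1 ht
  simp only at hdecr
  linarith

end FiniteTime

theorem finite_time_average_agreement_protocol_two {n : ℕ} (hn : 2 ≤ n)
    (A : Matrix (Fin n) (Fin n) ℝ)
    (hsymm : A.IsSymm) (hnonneg : ∀ i j, 0 ≤ A i j)
    (α : ℝ) (hα0 : 0 < α) (hα1 : α < 1)
    (B : Matrix (Fin n) (Fin n) ℝ) (hB : ∀ i j, B i j = A i j ^ (2 / (1 + α)))
    -- `μ` lists the eigenvalues of the Laplacian of `B` in increasing order, so that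
    -- `μ ⟨1, _⟩` is the second smallest eigenvalue `λ₂(L_B)`:
    (μ : Fin n → ℝ) (T : Matrix (Fin n) (Fin n) ℝ)
    (hT : Tᵀ * T = 1)
    (hdiagz : graphLaplacian B = Tᵀ * Matrix.diagonal μ * T)
    (hmono : Monotone μ)
    (hmu2 : 0 < μ ⟨1, by omega⟩)
    (x : ℝ → Fin n → ℝ)
    (hode : ∀ (t : ℝ) (i : Fin n), HasDerivAt (fun s => x s i)
      (∑ j, A i j * Real.sign (x t j - x t i) * |x t j - x t i| ^ α) t)
    (κ : ℝ) (hκ : κ = (∑ i, x 0 i) / n)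
    (V2 : ℝ → ℝ)
    (hV2 : V2 = fun t => (1 / 2) * ∑ i, (x t i - κ) ^ 2) :
    (∀ t : ℝ, 0 < V2 t →
        deriv V2 t ≤ -(2 ^ α * μ ⟨1, by omega⟩ ^ ((1 + α) / 2)) * V2 t ^ ((1 + α) / 2)) ∧
      (∀ t : ℝ,
        2 ^ (1 - α) * V2 0 ^ ((1 - α) / 2) / ((1 - α) * μ ⟨1, by omega⟩ ^ ((1 + α) / 2)) ≤ t →
        V2 t = 0 ∧ ∀ i : Fin n, x t i = κ) := by
  set l := μ ⟨1, by omega⟩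
  set p := (1 + α) / 2 with hp
  have hmean : ∀ t, ∑ i, (x t i - κ) = 0 := fun t => by
    rw [hκ, ← sum_eq_of_hasDerivAt_consensusField hsymm hode t]
    exact sum_sub_sum_div_card_eq_zero (by omega) (x t)
  set δ : ℝ → Fin n → ℝ := fun t i => x t i - κ
  have hV2δ : ∀ t, V2 t = (1 / 2) * (δ t ⬝ᵥ δ t) := fun t => by simp [hV2, δ, dotProduct, sq]
  have hV2' : ∀ t, HasDerivAt V2 (-(1 / 2) * ∑ i, ∑ j, A i j * |x t j - x t i| ^ (1 + α)) t :=
    fun t => by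
      rw [← sum_sub_mul_consensusField hsymm (by linarith) (x t) κ, hV2]
      exact hasDerivAt_half_sum_sq_sub (hode t) κ
  have hdecay : ∀ t, deriv V2 t ≤ -(2 ^ α * l ^ p) * V2 t ^ p := fun t => by
    have hfiedler := mul_dotProduct_self_le_dotProduct_graphLaplacian_mulVec (by omega) hT hdiagz
      hmono hmu2 (hmean t)
    have := mul_rpow_le_half_sum_mul_abs_rpow hsymm hnonneg (by linarith) hα1.le hB hmu2.le
      hfiedler
    simp only [sub_sub_sub_cancel_right] at this
    rw [(hV2' t).deriv, hV2δ t]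
    linarith
  have hzero : ∀ t, 2 ^ (1 - α) * V2 0 ^ ((1 - α) / 2) / ((1 - α) * l ^ p) ≤ t → V2 t = 0 := by
    intro t ht
    refine eq_zero_of_deriv_le_neg_mul_rpow (fun s => (hV2' s).differentiableAt)
      (fun s _ => hdecay s) (fun s => by rw [hV2]; positivity) (by positivity)
      (by linarith : p < 1) (ht.trans_eq' ?_)
    rw [show 1 - p = (1 - α) / 2 by rw [hp]; ring, Real.rpow_sub two_pos, Real.rpow_one]
    field_simp
  refine ⟨fun t _ => hdecay t, fun t ht => ⟨hzero t ht, fun i => ?_⟩⟩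
  have hδ := hzero t ht
  rw [hV2δ, mul_eq_zero, dotProduct_self_eq_zero] at hδ
  simpa [δ, sub_eq_zero] using congrFun (hδ.resolve_left (by norm_num)) i
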